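/- arXiv:1406.5293 — 3 statements merged into one kernel-verified Lean document; each statement's English description precedes it below -/
import Mathlib

section
/- Let P(x,t) = t^d + a₁(x) t^{d-1} + ⋯ + a_d(x) with a_j ∈ ℂ[x₁,…,x_k] and d ≥ 1, and let δ(P) = max_j deg(a_j)/j. If s ≥ 0 is a real number such that for some constant C > 0 every zero (x,t) of P satisfies |t| ≤ C(1+|x|)^s, then s ≥ δ(P). -/
/-!
Vieta's bound on the coefficients of a monic polynomial in terms of its roots gives
`‖a_i(x)‖ ≤ binom(d, i+1) (C (1 + ‖x‖)^s)^(i+1)`, so `a_i` grows at most like `‖x‖^(s(i+1))`.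
A polynomial of total degree `D` grows like `‖x‖^D` along any line `z ↦ z • v` on which its
top homogeneous component does not vanish, since there it restricts to a one-variable polynomial
of degree `D`. Hence `deg a_i ≤ s (i+1)` for every `i`.
-/

open Filter Topology

namespace Polynomial

theorem eval_eq_pow_mul_eval_reverse {K : Type*} [Field K] (q : K[X]) {x : K} (hx : x ≠ 0) :
    q.eval x = x ^ q.natDegree * q.reverse.eval x⁻¹ := by
  let := invertibleOfNonzero hx
  rw [mul_comm, ← invOf_eq_inv]
  exact (eval₂_reverse_mul_pow (RingHom.id K) x q).symm

variable {𝕜 : Type*} [RCLike 𝕜]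

theorem natDegree_le_of_norm_eval_le {q : 𝕜[X]} (hq : q ≠ 0) {K r : ℝ}
    (h : ∀ᶠ x : ℝ in atTop, ‖q.eval (x : 𝕜)‖ ≤ K * x ^ r) : (q.natDegree : ℝ) ≤ r := by
  by_contra! hlt
  -- `q x / x ^ n = q.reverse.eval x⁻¹` tends to the leading coefficient, but also to `0`.
  have hinv : Tendsto (fun x : ℝ => (x : 𝕜)⁻¹) atTop (𝓝 0) := by
    simpa [Function.comp_def] using
      ((RCLike.continuous_ofReal (K := 𝕜)).tendsto 0).comp tendsto_inv_atTop_zero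
  have hrev : Tendsto (fun x : ℝ => ‖q.reverse.eval (x : 𝕜)⁻¹‖) atTop (𝓝 ‖q.leadingCoeff‖) := by
    simpa [← coeff_zero_eq_eval_zero, coeff_zero_reverse] using
      ((q.reverse.continuous.tendsto 0).comp hinv).norm
  have hdecay : Tendsto (fun x : ℝ => K * x ^ (r - q.natDegree)) atTop (𝓝 0) := by
    simpa using (tendsto_rpow_neg_atTop (sub_pos.mpr hlt)).const_mul K
  have hle : ∀ᶠ x : ℝ in atTop, ‖q.reverse.eval (x : 𝕜)⁻¹‖ ≤ K * x ^ (r - q.natDegree) := by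
    filter_upwards [h, eventually_gt_atTop 0] with x hx hx0
    rw [eval_eq_pow_mul_eval_reverse q (RCLike.ofReal_ne_zero.mpr hx0.ne'), norm_mul, norm_pow,
      RCLike.norm_ofReal, abs_of_pos hx0] at hx
    rw [Real.rpow_sub hx0, Real.rpow_natCast, mul_div_assoc', le_div_iff₀ (by positivity)]
    linarith
  exact hq <| leadingCoeff_eq_zero.mp <| norm_le_zero_iff.mp <|
    le_of_tendsto_of_tendsto hrev hdecay hle

end Polynomial

namespace MvPolynomial

section CommSemiring

variable {σ R : Type*} [CommSemiring R]

noncomputable def restrictLine (v : σ → R) : MvPolynomial σ R →ₐ[R] Polynomial R :=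
  aeval fun j => Polynomial.C (v j) * Polynomial.X

theorem eval_restrictLine (v : σ → R) (p : MvPolynomial σ R) (z : R) :
    (restrictLine v p).eval z = eval (z • v) p := by
  rw [← Polynomial.coe_aeval_eq_eval, restrictLine, comp_aeval_apply]
  change aeval _ p = aeval (z • v) p
  congr 2
  funext i
  rw [map_mul, Polynomial.aeval_C, Polynomial.aeval_X, Pi.smul_apply, smul_eq_mul, mul_comm]
  rfl

theorem restrictLine_monomial (v : σ → R) (m : σ →₀ ℕ) (c : R) :
    restrictLine v (monomial m c) =
      Polynomial.C (eval v (monomial m c)) * Polynomial.X ^ m.degree := by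
  simp only [restrictLine, aeval_monomial, eval_monomial, Finsupp.prod, mul_pow,
    Finset.prod_mul_distrib, ← Polynomial.C_pow, ← map_prod, Finset.prod_pow_eq_pow_sum,
    Polynomial.algebraMap_eq, Polynomial.C_mul, Finsupp.degree, mul_assoc]
  rfl

theorem coeff_restrictLine (v : σ → R) (p : MvPolynomial σ R) (n : ℕ) :
    (restrictLine v p).coeff n = eval v (homogeneousComponent n p) := by
  induction p using MvPolynomial.induction_on' with
  | monomial m c =>
    rw [restrictLine_monomial, Polynomial.coeff_C_mul_X_pow,
      homogeneousComponent_of_mem (isHomogeneous_monomial c rfl)]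
    split_ifs <;> simp_all
  | add p q hp hq => simp [hp, hq]

theorem homogeneousComponent_totalDegree_ne_zero {p : MvPolynomial σ R} (hp : p ≠ 0) :
    homogeneousComponent p.totalDegree p ≠ 0 := by
  obtain ⟨m, hm, hmax⟩ := Finset.exists_mem_eq_sup p.support (support_nonempty.mpr hp)
    fun m : σ →₀ ℕ => m.sum fun _ e => e
  intro h
  have := congrArg (coeff m) h
  rw [coeff_homogeneousComponent, if_pos (show m.degree = p.totalDegree from hmax.symm),
    coeff_zero] at this
  exact mem_support_iff.mp hm this

theorem natDegree_restrictLine {v : σ → R} {p : MvPolynomial σ R}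
    (hv : eval v (homogeneousComponent p.totalDegree p) ≠ 0) :
    (restrictLine v p).natDegree = p.totalDegree := by
  refine Polynomial.natDegree_eq_of_le_of_coeff_ne_zero ?_ (by rwa [coeff_restrictLine])
  refine Polynomial.natDegree_le_iff_coeff_eq_zero.mpr fun n hn => ?_
  rw [coeff_restrictLine, homogeneousComponent_eq_zero _ _ hn, map_zero]

end CommSemiring

theorem exists_eval_homogeneousComponent_totalDegree_ne_zero {σ R : Type*} [CommRing R]
    [IsDomain R] [Infinite R] {p : MvPolynomial σ R} (hp : p ≠ 0) :
    ∃ v : σ → R, eval v (homogeneousComponent p.totalDegree p) ≠ 0 := by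
  by_contra! h
  exact homogeneousComponent_totalDegree_ne_zero hp <|
    MvPolynomial.funext fun x => by rw [h x, map_zero]

theorem totalDegree_le_of_norm_eval_le {σ 𝕜 : Type*} [RCLike 𝕜] [Fintype σ]
    {p : MvPolynomial σ 𝕜} {K r : ℝ} (hr : 0 ≤ r) (h : ∀ x, ‖eval x p‖ ≤ K * (1 + ‖x‖) ^ r) :
    (p.totalDegree : ℝ) ≤ r := by
  rcases eq_or_ne p 0 with rfl | hp
  · simpa using hr
  obtain ⟨v, hv⟩ := exists_eval_homogeneousComponent_totalDegree_ne_zero hp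
  have hK : 0 ≤ K := by simpa using (norm_nonneg _).trans (h 0)
  have hq : restrictLine v p ≠ 0 := fun h0 =>
    hv (by rw [← coeff_restrictLine, h0, Polynomial.coeff_zero])
  rw [← natDegree_restrictLine hv]
  refine Polynomial.natDegree_le_of_norm_eval_le hq (K := K * (1 + ‖v‖) ^ r) ?_
  filter_upwards [eventually_ge_atTop 1] with x hx
  have hxv : ‖(x : 𝕜) • v‖ = x * ‖v‖ := by
    rw [norm_smul, RCLike.norm_ofReal, abs_of_nonneg (by linarith)]
  calc ‖(restrictLine v p).eval (x : 𝕜)‖ = ‖eval ((x : 𝕜) • v) p‖ := by rw [eval_restrictLine]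
    _ ≤ K * (1 + ‖(x : 𝕜) • v‖) ^ r := h _
    _ ≤ K * ((1 + ‖v‖) * x) ^ r := by
      gcongr
      rw [hxv]
      nlinarith [norm_nonneg v]
    _ = K * (1 + ‖v‖) ^ r * x ^ r := by
      rw [Real.mul_rpow (by positivity) (by linarith)]
      ring

end MvPolynomial

open Polynomial in
theorem norm_coeff_le_of_forall_root_norm_le {K : Type*} [NormedField K] [IsAlgClosed K] {d : ℕ}
    (c : Fin d → K) {B : ℝ} (h : ∀ t : K, t ^ d + ∑ i, c i * t ^ (d - 1 - i.1) = 0 → ‖t‖ ≤ B)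
    (i : Fin d) : ‖c i‖ ≤ B ^ (i.1 + 1) * d.choose (i.1 + 1) := by
  set f : K[X] := X ^ d + ∑ j, C (c j) * X ^ (d - 1 - j.1) with hf
  have hlower : (∑ j, C (c j) * X ^ (d - 1 - j.1)).degree < (d : WithBot ℕ) := by
    refine (degree_sum_le _ _).trans_lt ((Finset.sup_lt_iff (WithBot.bot_lt_coe d)).mpr ?_)
    intro j _
    exact (degree_C_mul_X_pow_le _ _).trans_lt (Nat.cast_lt.mpr (by omega))
  have hmonic : f.Monic := monic_X_pow_add hlower
  have hdeg : f.natDegree = d := by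
    rw [hf, natDegree_add_eq_left_of_degree_lt (by rwa [degree_X_pow]), natDegree_X_pow]
  have hcoeff : f.coeff (d - 1 - i.1) = c i := by
    rw [hf, coeff_add, coeff_X_pow, if_neg (by omega), zero_add, finsetSum_coeff,
      Finset.sum_eq_single i (fun j _ hji => ?_) (by simp)]
    · simp
    · rw [coeff_C_mul_X_pow, if_neg (by have := Fin.val_ne_of_ne hji; omega)]
  have hroots : ∀ t ∈ (f.map (RingHom.id K)).roots, ‖t‖ ≤ B := by
    intro t ht
    rw [Polynomial.map_id] at ht
    refine h t ?_
    simpa [hf, eval_finsetSum] using isRoot_of_mem_roots ht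
  have key := coeff_le_of_roots_le (d - 1 - i.1) hmonic (IsAlgClosed.splits _) hroots
  rwa [Polynomial.map_id, hcoeff, hdeg, show d - (d - 1 - i.1) = i.1 + 1 by omega,
    Nat.choose_symm_of_eq_add (show d = (d - 1 - i.1) + (i.1 + 1) by omega)] at key

theorem stmt_4_general (k d : ℕ) (a : Fin d → MvPolynomial (Fin k) ℂ)
    (δ : ℝ)
    (hδ : IsGreatest {r : ℝ | ∃ i : Fin d, r = ((a i).totalDegree : ℝ) / (i.1 + 1)} δ)
    (s : ℝ) (hs : 0 ≤ s) (C : ℝ)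
    (hbound : ∀ (x : Fin k → ℂ) (t : ℂ),
      t ^ d + ∑ i : Fin d, MvPolynomial.eval x (a i) * t ^ (d - 1 - i.1) = 0 →
      ‖t‖ ≤ C * (1 + ‖x‖) ^ s) :
    δ ≤ s := by
  obtain ⟨⟨i, rfl⟩, -⟩ := hδ
  have hcoeff (x : Fin k → ℂ) : ‖MvPolynomial.eval x (a i)‖
      ≤ d.choose (i.1 + 1) * C ^ (i.1 + 1) * (1 + ‖x‖) ^ (s * (i.1 + 1)) :=
    calc ‖MvPolynomial.eval x (a i)‖ ≤ (C * (1 + ‖x‖) ^ s) ^ (i.1 + 1) * d.choose (i.1 + 1) :=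
          norm_coeff_le_of_forall_root_norm_le _ (hbound x) i
      _ = _ := by
        rw [mul_pow, ← Real.rpow_mul_natCast (by positivity)]
        push_cast
        ring
  rw [div_le_iff₀ (by positivity)]
  exact MvPolynomial.totalDegree_le_of_norm_eval_le (by positivity) hcoeff

/-- minimality in Strzeboński's lemma: if `s ≥ 0` and every zero
`(x,t)` of the monic polynomial `P(x,t)=t^d+a₁(x)t^{d-1}+⋯+a_d(x)` satisfies
`‖t‖ ≤ C(1+‖x‖)^s` for some `C > 0`, then `s ≥ δ(P) = max_j (deg a_j)/j`. -/
theorem stmt_4 (k d : ℕ) (hd : 0 < d) (a : Fin d → MvPolynomial (Fin k) ℂ)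
    (δ : ℝ)
    (hδ : IsGreatest {r : ℝ | ∃ i : Fin d, r = ((a i).totalDegree : ℝ) / (i.1 + 1)} δ)
    (s : ℝ) (hs : 0 ≤ s) (C : ℝ) (hC : 0 < C)
    (hbound : ∀ (x : Fin k → ℂ) (t : ℂ),
      t ^ d + ∑ i : Fin d, MvPolynomial.eval x (a i) * t ^ (d - 1 - i.1) = 0 →
      ‖t‖ ≤ C * (1 + ‖x‖) ^ s) :
    δ ≤ s :=
  stmt_4_general k d a δ hδ s hs C hbound
end

section
/- Let γ : ℂ → ℂ^m be a polynomial mapping with d := max_j deg γ_j ≥ 1, and let g : ℂ → ℂ be a polynomial with g = f ∘ γ for some function f defined on the image Γ = γ(ℂ). Suppose q > 0 is such that there exist c, R > 0 with |f(x)| ≥ c|x|^q for all x ∈ Γ with |x| ≥ R (maximum norms). Then q ≤ deg(g)/d. -/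
/-!
Along `z → ∞` in `ℂ`, a coordinate of maximal degree gives `‖γ z‖ ≳ ‖z‖^d`, while `g` is a
polynomial, so `‖g z‖ ≲ ‖z‖^{deg g}`. The Łojasiewicz bound then yields
`‖z‖^{dq} ≲ ‖γ z‖^q ≲ ‖f (γ z)‖ = ‖g z‖ ≲ ‖z‖^{deg g}`, which forces `dq ≤ deg g`.
-/

open Polynomial Filter Asymptotics Bornology

lemma le_of_rpow_isBigO_rpow_of_tendsto_atTop {α : Type*} {l : Filter α} [l.NeBot]
    {r : α → ℝ} (hr : Tendsto r l atTop) {a b : ℝ}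
    (h : (fun x => r x ^ a) =O[l] fun x => r x ^ b) : a ≤ b := by
  by_contra! hba
  obtain ⟨C, hC⟩ := h.bound
  obtain ⟨x, hCx, hx, hx0⟩ :=
    (((tendsto_rpow_atTop (sub_pos.2 hba)).comp hr).eventually_gt_atTop C).and
      (hC.and (hr.eventually_gt_atTop 0)) |>.exists
  simp only [Function.comp_apply] at hCx
  rw [Real.norm_of_nonneg (by positivity), Real.norm_of_nonneg (by positivity)] at hx
  have hsplit : r x ^ a = r x ^ (a - b) * r x ^ b := by
    rw [← Real.rpow_add hx0, sub_add_cancel]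
  nlinarith [Real.rpow_pos_of_pos hx0 b]

namespace Polynomial

variable {R : Type*} [NormedRing R] [NormMulClass R]

lemma isBigO_pow_natDegree_cobounded (P : R[X]) :
    P.eval =O[cobounded R] (· ^ P.natDegree) :=
  isEquivalent_cobounded_leading_monomial.isBigO.trans (isBigO_const_mul_self _ _ _)

lemma pow_natDegree_isBigO_cobounded {P : R[X]} (hP : P ≠ 0) :
    (· ^ P.natDegree) =O[cobounded R] P.eval :=
  (isBigO_self_const_mul (leadingCoeff_ne_zero.2 hP) _ _).trans
    isEquivalent_cobounded_leading_monomial.symm.isBigO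

end Polynomial

section PolynomialCurve

variable {ι 𝕜 : Type*} [Fintype ι] [NormedField 𝕜] (γ : ι → 𝕜[X])

lemma tendsto_norm_eval_pi_cobounded {j : ι} (hj : 0 < (γ j).degree) :
    Tendsto (fun z => ‖fun i => (γ i).eval z‖) (cobounded 𝕜) atTop :=
  tendsto_atTop_mono (fun z => norm_le_pi_norm (fun i => (γ i).eval z) j)
    ((γ j).tendsto_norm_atTop hj tendsto_norm_cobounded_atTop)

lemma norm_rpow_isBigO_norm_eval_pi_rpow {j : ι} (hj : γ j ≠ 0) {q : ℝ} (hq : 0 ≤ q) :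
    (fun z : 𝕜 => ‖z‖ ^ ((γ j).natDegree * q)) =O[cobounded 𝕜]
      fun z => ‖fun i => (γ i).eval z‖ ^ q := by
  have hcoord : (fun z : 𝕜 => ‖z ^ (γ j).natDegree‖) =O[cobounded 𝕜]
      fun z => ‖fun i => (γ i).eval z‖ :=
    (pow_natDegree_isBigO_cobounded hj).norm_norm.trans_le fun z => by
      simpa only [norm_norm] using norm_le_pi_norm (fun i => (γ i).eval z) j
  refine (hcoord.rpow hq (Eventually.of_forall fun _ => norm_nonneg _)).congr_left fun z => ?_
  rw [norm_pow, Real.rpow_natCast_mul (norm_nonneg z)]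

end PolynomialCurve

theorem stmt_14_general (m : ℕ) (γ : Fin m → Polynomial ℂ) (d : ℕ)
    (hd : d = Finset.univ.sup fun j => (γ j).natDegree) (hd1 : 1 ≤ d)
    (f : (Fin m → ℂ) → ℂ) (g : Polynomial ℂ)
    (hg : ∀ t : ℂ, g.eval t = f (fun j => (γ j).eval t))
    (q : ℝ) (hq : 0 < q) (c R : ℝ) (hc : 0 < c)
    (hlow : ∀ x ∈ Set.range (fun t : ℂ => fun j => (γ j).eval t),
      R ≤ ‖x‖ → c * ‖x‖ ^ q ≤ ‖f x‖) :
    q ≤ (g.natDegree : ℝ) / d := by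
  have hne : (Finset.univ : Finset (Fin m)).Nonempty :=
    Finset.nonempty_iff_ne_empty.2 fun h => by simp [h] at hd; omega
  obtain ⟨j, -, hj⟩ := Finset.exists_mem_eq_sup _ hne fun j => (γ j).natDegree
  have hγj : 0 < (γ j).natDegree := hj ▸ hd ▸ hd1
  have hlower := norm_rpow_isBigO_norm_eval_pi_rpow γ (ne_zero_of_natDegree_gt hγj) hq.le
  have hmiddle : (fun z => ‖fun i => (γ i).eval z‖ ^ q) =O[cobounded ℂ] g.eval := by
    refine IsBigO.of_bound c⁻¹ <| ((tendsto_norm_eval_pi_cobounded γ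
      (natDegree_pos_iff_degree_pos.1 hγj)).eventually_ge_atTop R).mono fun z hz => ?_
    rw [hg, Real.norm_of_nonneg (by positivity), le_inv_mul_iff₀ hc]
    exact hlow _ ⟨z, rfl⟩ hz
  have hupper : g.eval =O[cobounded ℂ] fun z => ‖z‖ ^ (g.natDegree : ℝ) :=
    (isBigO_pow_natDegree_cobounded g).trans_le fun z => by simp
  rw [le_div_iff₀ (by exact_mod_cast hd1), mul_comm, hd, hj]
  exact le_of_rpow_isBigO_rpow_of_tendsto_atTop tendsto_norm_cobounded_atTop
    (hlower.trans (hmiddle.trans hupper))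

/-- Łojasiewicz exponent inequality on a polynomial curve: if
`γ : ℂ → ℂ^m` has `d = max_j deg γ_j ≥ 1`, `f` is a function on `Γ = γ(ℂ)` whose
pullback `g = f ∘ γ` is a polynomial, and `‖f x‖ ≥ c‖x‖^q` for `x ∈ Γ`, `‖x‖ ≥ R`
with `q, c, R > 0`, then `q ≤ deg(g)/d`. -/
theorem stmt_14 (m : ℕ) (γ : Fin m → Polynomial ℂ) (d : ℕ)
    (hd : d = Finset.univ.sup fun j => (γ j).natDegree) (hd1 : 1 ≤ d)
    (f : (Fin m → ℂ) → ℂ) (g : Polynomial ℂ)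
    (hg : ∀ t : ℂ, g.eval t = f (fun j => (γ j).eval t))
    (q : ℝ) (hq : 0 < q) (c R : ℝ) (hc : 0 < c) (hR : 0 < R)
    (hlow : ∀ x ∈ Set.range (fun t : ℂ => fun j => (γ j).eval t),
      R ≤ ‖x‖ → c * ‖x‖ ^ q ≤ ‖f x‖) :
    q ≤ (g.natDegree : ℝ) / d :=
  stmt_14_general m γ d hd hd1 f g hg q hq c R hc hlow
end

section
/- Let γ : ℂ → ℂ^m be a polynomial mapping with d := max_j deg γ_j ≥ 1 such that |γ(t)|/|t|^d tends to a positive limit as |t| → ∞, and suppose f : γ(ℂ) → ℂ is a function such that g := f ∘ γ is a nonconstant polynomial. Then the growth exponent of f on Γ := γ(ℂ) equals deg(g)/d; that is: (i) there exists C > 0 with |f(x)| ≤ C(1+|x|)^{deg(g)/d} for all x ∈ Γ, and (ii) no exponent s < deg(g)/d admits such a bound. -/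
set_option maxHeartbeats 1000000

open Filter

lemma evalBound15 (p : Polynomial ℂ) (t : ℂ) :
    ‖p.eval t‖ ≤ (∑ i ∈ Finset.range (p.natDegree + 1), ‖p.coeff i‖) *
      (max 1 ‖t‖) ^ p.natDegree := by
  rw [Polynomial.eval_eq_sum_range, Finset.sum_mul]
  refine (norm_sum_le _ _).trans (Finset.sum_le_sum fun i hi => ?_)
  rw [norm_mul, norm_pow]
  have h1 : ‖t‖ ^ i ≤ (max 1 ‖t‖) ^ i :=
    pow_le_pow_left₀ (norm_nonneg t) (le_max_right 1 ‖t‖) i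
  have h2 : (max 1 ‖t‖) ^ i ≤ (max 1 ‖t‖) ^ p.natDegree :=
    pow_le_pow_right₀ (le_max_left 1 ‖t‖) (Nat.lt_succ_iff.mp (Finset.mem_range.mp hi))
  exact mul_le_mul_of_nonneg_left (h1.trans h2) (norm_nonneg _)

lemma cobounded_extract {P : ℂ → Prop} (h : ∀ᶠ t in Bornology.cobounded ℂ, P t) :
    ∃ R : ℝ, ∀ t : ℂ, R ≤ ‖t‖ → P t := by
  obtain ⟨R, -, hR⟩ := (Filter.hasBasis_cobounded_norm.eventually_iff).mp h
  exact ⟨R, fun t ht => hR ht⟩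

/-- on a polynomial curve `Γ = γ(ℂ)` with `d = max_j deg γ_j ≥ 1` and
`‖γ(t)‖/|t|^d → L > 0`, if `f : Γ → ℂ` has pullback `g = f ∘ γ` a nonconstant polynomial,
then the growth exponent of `f` on `Γ` equals `deg(g)/d`: the bound
`‖f x‖ ≤ C(1+‖x‖)^{deg(g)/d}` holds on `Γ` for some `C > 0`, and no exponent
`s < deg(g)/d` admits such a bound. -/
theorem stmt_15 (m : ℕ) (γ : Fin m → Polynomial ℂ) (d : ℕ)
    (hd : d = Finset.univ.sup fun j => (γ j).natDegree) (hd1 : 1 ≤ d)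
    (L : ℝ) (hL : 0 < L)
    (hlim : Tendsto (fun t : ℂ => ‖(fun j => (γ j).eval t : Fin m → ℂ)‖ / ‖t‖ ^ d)
      (Bornology.cobounded ℂ) (nhds L))
    (f : (Fin m → ℂ) → ℂ) (g : Polynomial ℂ)
    (hg : ∀ t : ℂ, g.eval t = f (fun j => (γ j).eval t))
    (hgdeg : 0 < g.natDegree) :
    (∃ C : ℝ, 0 < C ∧ ∀ x ∈ Set.range (fun t : ℂ => fun j => (γ j).eval t),
        ‖f x‖ ≤ C * (1 + ‖x‖) ^ ((g.natDegree : ℝ) / d)) ∧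
    ∀ s : ℝ, s < (g.natDegree : ℝ) / d →
      ¬ ∃ C : ℝ, 0 < C ∧ ∀ x ∈ Set.range (fun t : ℂ => fun j => (γ j).eval t),
        ‖f x‖ ≤ C * (1 + ‖x‖) ^ s := by
  set Γ : ℂ → (Fin m → ℂ) := fun t => fun j => (γ j).eval t with hΓ
  set k := g.natDegree with hkdef
  set e : ℝ := (k : ℝ) / d with hedef
  have hd0 : (0 : ℝ) < d := by exact_mod_cast hd1
  have hdne : (d : ℝ) ≠ 0 := ne_of_gt hd0
  have hke : 0 < e := div_pos (by exact_mod_cast hgdeg) hd0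
  set Sg : ℝ := ∑ i ∈ Finset.range (k + 1), ‖g.coeff i‖ with hSgdef
  have hg0 : g ≠ 0 := Polynomial.ne_zero_of_natDegree_gt hgdeg
  have hlc : 0 < ‖g.leadingCoeff‖ :=
    norm_pos_iff.mpr (Polynomial.leadingCoeff_ne_zero.mpr hg0)
  have hSg : 0 < Sg := by
    have hmem : k ∈ Finset.range (k + 1) := Finset.self_mem_range_succ k
    have := Finset.single_le_sum (f := fun i => ‖g.coeff i‖)
      (fun i _ => norm_nonneg _) hmem
    calc (0:ℝ) < ‖g.leadingCoeff‖ := hlc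
      _ = ‖g.coeff k‖ := by rw [Polynomial.leadingCoeff]
      _ ≤ Sg := this
  -- rpow basics
  have hbase1 : ∀ t : ℂ, (1:ℝ) ≤ 1 + ‖Γ t‖ := fun t => by
    have := norm_nonneg (Γ t); linarith
  have hrpow1 : ∀ (t : ℂ) (u : ℝ), 0 ≤ u → (1:ℝ) ≤ (1 + ‖Γ t‖) ^ u := fun t u hu => by
    calc (1:ℝ) = (1:ℝ) ^ u := (Real.one_rpow u).symm
      _ ≤ (1 + ‖Γ t‖) ^ u := Real.rpow_le_rpow zero_le_one (hbase1 t) hu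
  constructor
  · -- Part (i)
    obtain ⟨T₀, hT₀⟩ := cobounded_extract
      (hlim.eventually (eventually_ge_nhds (by linarith : L / 2 < L)))
    set T : ℝ := max 1 T₀ with hTdef
    have hT1 : (1:ℝ) ≤ T := le_max_left _ _
    set C₀ : ℝ := max (Sg * T ^ k) (Sg * (2 / L) ^ e) with hC₀def
    have hTk : (0:ℝ) ≤ T ^ k := pow_nonneg (zero_le_one.trans hT1) k
    have hC₀0 : 0 ≤ C₀ := le_trans (mul_nonneg hSg.le hTk) (le_max_left _ _)
    have key : ∀ t : ℂ, ‖g.eval t‖ ≤ C₀ * (1 + ‖Γ t‖) ^ e := by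
      intro t
      rcases le_total ‖t‖ T with hle | hge
      · have h1 : ‖g.eval t‖ ≤ Sg * T ^ k := by
          refine (evalBound15 g t).trans ?_
          have : max 1 ‖t‖ ≤ T := max_le hT1 hle
          exact mul_le_mul_of_nonneg_left
            (pow_le_pow_left₀ (le_trans zero_le_one (le_max_left _ _)) this k) hSg.le
        calc ‖g.eval t‖ ≤ Sg * T ^ k := h1
          _ ≤ C₀ := le_max_left _ _
          _ = C₀ * 1 := (mul_one _).symm
          _ ≤ C₀ * (1 + ‖Γ t‖) ^ e := by
              exact mul_le_mul_of_nonneg_left (hrpow1 t e hke.le) hC₀0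
      · have ht1 : (1:ℝ) ≤ ‖t‖ := hT1.trans hge
        have ht0 : (0:ℝ) < ‖t‖ := lt_of_lt_of_le one_pos ht1
        have hγlow : L / 2 * ‖t‖ ^ d ≤ ‖Γ t‖ := by
          have := hT₀ t ((le_max_right 1 T₀).trans hge)
          calc L / 2 * ‖t‖ ^ d ≤ ‖Γ t‖ / ‖t‖ ^ d * ‖t‖ ^ d := by
                exact mul_le_mul_of_nonneg_right this (by positivity)
            _ = ‖Γ t‖ := div_mul_cancel₀ _ (by positivity)
        have hb : L / 2 * ‖t‖ ^ d ≤ 1 + ‖Γ t‖ := by linarith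
        have hrw : (L / 2 * ‖t‖ ^ d) ^ e = (L / 2) ^ e * ‖t‖ ^ k := by
          rw [Real.mul_rpow (by positivity) (by positivity),
            ← Real.rpow_natCast ‖t‖ d, ← Real.rpow_mul (norm_nonneg t)]
          congr 1
          rw [hedef]
          rw [show (d : ℝ) * ((k : ℝ) / d) = (k : ℝ) by field_simp]
          exact Real.rpow_natCast _ _
        have hmono : (L / 2) ^ e * ‖t‖ ^ k ≤ (1 + ‖Γ t‖) ^ e := by
          rw [← hrw]
          exact Real.rpow_le_rpow (by positivity) hb hke.le
        have h1 : ‖g.eval t‖ ≤ Sg * ‖t‖ ^ k := by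
          refine (evalBound15 g t).trans ?_
          rw [max_eq_right ht1]
        have hcomb : Sg * ‖t‖ ^ k ≤ Sg * (2 / L) ^ e * (1 + ‖Γ t‖) ^ e := by
          have h2 : Sg * (2 / L) ^ e * ((L / 2) ^ e * ‖t‖ ^ k) = Sg * ‖t‖ ^ k := by
            rw [← mul_assoc, mul_assoc Sg, ← Real.mul_rpow (by positivity) (by positivity),
              show (2 / L) * (L / 2) = 1 by field_simp, Real.one_rpow, mul_one]
          rw [← h2]
          exact mul_le_mul_of_nonneg_left hmono (mul_nonneg hSg.le (Real.rpow_nonneg (by positivity) e))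
        calc ‖g.eval t‖ ≤ Sg * (2 / L) ^ e * (1 + ‖Γ t‖) ^ e := h1.trans hcomb
          _ ≤ C₀ * (1 + ‖Γ t‖) ^ e := by
              exact mul_le_mul_of_nonneg_right (le_max_right _ _)
                (Real.rpow_nonneg (le_trans zero_le_one (hbase1 t)) e)
    refine ⟨C₀ + 1, by linarith, ?_⟩
    rintro x ⟨t, rfl⟩
    have hfx : f (Γ t) = g.eval t := (hg t).symm
    calc ‖f (Γ t)‖ = ‖g.eval t‖ := by rw [hfx]
      _ ≤ C₀ * (1 + ‖Γ t‖) ^ e := key t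
      _ ≤ (C₀ + 1) * (1 + ‖Γ t‖) ^ e := by
          have h0 : (0:ℝ) ≤ (1 + ‖Γ t‖) ^ e := Real.rpow_nonneg (le_trans zero_le_one (hbase1 t)) e
          nlinarith
  · -- Part (ii)
    rintro s hs ⟨C, hC, hbd⟩
    set e' : ℝ := max s 0 with he'def
    have he'0 : 0 ≤ e' := le_max_right _ _
    have he' : e' < e := max_lt hs hke
    have hbd' : ∀ t : ℂ, ‖g.eval t‖ ≤ C * (1 + ‖Γ t‖) ^ e' := by
      intro t
      have h1 := hbd (Γ t) ⟨t, rfl⟩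
      rw [← hg t] at h1
      refine h1.trans (mul_le_mul_of_nonneg_left ?_ hC.le)
      exact Real.rpow_le_rpow_of_exponent_le (hbase1 t) (le_max_left _ _)
    obtain ⟨T₁, hT₁⟩ := cobounded_extract
      (hlim.eventually (eventually_le_nhds (by linarith : L < 2 * L)))
    set r : Polynomial ℂ := g.eraseLead with hrdef
    set Sr : ℝ := ∑ i ∈ Finset.range (r.natDegree + 1), ‖r.coeff i‖ with hSrdef
    have hSr0 : 0 ≤ Sr := Finset.sum_nonneg fun i _ => norm_nonneg _
    set lc : ℂ := g.leadingCoeff with hlcdef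
    set X₀ : ℝ := max (max 1 T₁) (2 * (Sr + 1) / ‖lc‖) with hX₀def
    set K : ℝ := C * (1 + 2 * L) ^ e' with hKdef
    have hK0 : 0 < K := by positivity
    have hpos : 0 < (k : ℝ) - d * e' := by
      have : (d:ℝ) * e' < d * e := by exact mul_lt_mul_of_pos_left he' hd0
      have h2 : (d:ℝ) * e = k := by rw [hedef]; field_simp
      linarith
    have hev1 : ∀ᶠ x in atTop, x ^ ((k : ℝ) - d * e') ≤ 2 * K / ‖lc‖ := by
      filter_upwards [eventually_ge_atTop X₀] with x hx
      have hx1 : (1:ℝ) ≤ x := le_trans (le_trans (le_max_left 1 T₁) (le_max_left _ _)) hx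
      have hx0 : (0:ℝ) < x := lt_of_lt_of_le one_pos hx1
      set t : ℂ := (x : ℂ) with htdef
      have hnt : ‖t‖ = x := by
        rw [htdef, Complex.norm_real, Real.norm_eq_abs, abs_of_nonneg hx0.le]
      -- lower bound for ‖g.eval t‖
      have hsplit : g.eval t = r.eval t + lc * t ^ k := by
        conv_lhs => rw [← g.eraseLead_add_C_mul_X_pow]
        rw [Polynomial.eval_add, Polynomial.eval_mul, Polynomial.eval_pow, Polynomial.eval_C,
          Polynomial.eval_X]
      have hnormlc : ‖lc * t ^ k‖ = ‖lc‖ * x ^ k := by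
        rw [norm_mul, norm_pow, hnt]
      have hr1 : ‖r.eval t‖ ≤ Sr * x ^ (k - 1) := by
        refine (evalBound15 r t).trans ?_
        rw [hnt, max_eq_right hx1]
        refine mul_le_mul_of_nonneg_left ?_ hSr0
        exact pow_le_pow_right₀ hx1 (le_trans (Polynomial.eraseLead_natDegree_le g) (le_refl _))
      have htri : ‖lc‖ * x ^ k - ‖r.eval t‖ ≤ ‖g.eval t‖ := by
        have h := norm_sub_le (r.eval t + lc * t ^ k) (r.eval t)
        simp only [add_sub_cancel_left] at h
        rw [hnormlc] at h
        rw [hsplit]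
        linarith
      have hxk : x ^ k = x * x ^ (k - 1) := by
        conv_lhs => rw [show k = (k - 1) + 1 from (Nat.succ_pred_eq_of_pos hgdeg).symm]
        ring
      have hSrle : Sr * x ^ (k - 1) ≤ ‖lc‖ / 2 * x ^ k := by
        have hxle : 2 * (Sr + 1) / ‖lc‖ ≤ x := le_trans (le_max_right _ _) hx
        have h1 : 2 * (Sr + 1) ≤ ‖lc‖ * x := by
          rw [div_le_iff₀ hlc] at hxle; linarith [hxle]
        have h2 : Sr ≤ ‖lc‖ / 2 * x := by linarith
        rw [hxk]
        have hp : (0:ℝ) ≤ x ^ (k - 1) := by positivity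
        calc Sr * x ^ (k-1) ≤ (‖lc‖ / 2 * x) * x ^ (k-1) :=
              mul_le_mul_of_nonneg_right h2 hp
          _ = ‖lc‖ / 2 * (x * x ^ (k-1)) := by ring
      have hglow : ‖lc‖ / 2 * x ^ k ≤ ‖g.eval t‖ := by
        have := hr1.trans hSrle
        linarith
      -- upper bound for ‖Γ t‖
      have hγup : ‖Γ t‖ ≤ 2 * L * x ^ d := by
        have h1 := hT₁ t (by rw [hnt]; exact le_trans (le_trans (le_max_right 1 T₁) (le_max_left _ _)) hx)
        rw [hnt] at h1
        calc ‖Γ t‖ = ‖Γ t‖ / x ^ d * x ^ d := (div_mul_cancel₀ _ (by positivity)).symm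
          _ ≤ 2 * L * x ^ d := mul_le_mul_of_nonneg_right h1 (by positivity)
      have hxd1 : (1:ℝ) ≤ x ^ d := one_le_pow₀ hx1
      have hbase : 1 + ‖Γ t‖ ≤ (1 + 2 * L) * x ^ d := by nlinarith
      have hup : ‖g.eval t‖ ≤ K * x ^ ((d : ℝ) * e') := by
        refine (hbd' t).trans ?_
        have h1 : (1 + ‖Γ t‖) ^ e' ≤ ((1 + 2 * L) * x ^ d) ^ e' :=
          Real.rpow_le_rpow (by positivity) hbase he'0
        have h2 : ((1 + 2 * L) * x ^ d) ^ e' = (1 + 2 * L) ^ e' * x ^ ((d:ℝ) * e') := by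
          rw [Real.mul_rpow (by positivity) (by positivity),
            ← Real.rpow_natCast x d, ← Real.rpow_mul hx0.le]
        rw [hKdef]
        calc C * (1 + ‖Γ t‖) ^ e' ≤ C * ((1 + 2 * L) ^ e' * x ^ ((d:ℝ) * e')) := by
              rw [← h2]; exact mul_le_mul_of_nonneg_left h1 hC.le
          _ = C * (1 + 2 * L) ^ e' * x ^ ((d:ℝ) * e') := by ring
      -- combine
      have hfin : ‖lc‖ / 2 * x ^ ((k:ℝ)) ≤ K * x ^ ((d:ℝ) * e') := by
        rw [Real.rpow_natCast]
        exact hglow.trans hup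
      rw [Real.rpow_sub hx0, div_le_div_iff₀ (Real.rpow_pos_of_pos hx0 _) hlc]
      calc x ^ (k:ℝ) * ‖lc‖ = ‖lc‖ / 2 * x ^ (k:ℝ) * 2 := by ring
        _ ≤ K * x ^ ((d:ℝ) * e') * 2 := by nlinarith [Real.rpow_pos_of_pos hx0 ((d:ℝ)*e')]
        _ = 2 * K * x ^ ((d:ℝ) * e') := by ring
    have hev2 : ∀ᶠ x : ℝ in atTop, 2 * K / ‖lc‖ < x ^ ((k : ℝ) - d * e') :=
      (tendsto_rpow_atTop hpos).eventually_gt_atTop _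
    obtain ⟨x, h1, h2⟩ := (hev1.and hev2).exists
    linarith
end
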